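/- arXiv:2312.00521 — 4 statements merged into one kernel-verified Lean document; each statement's English description precedes it below -/
import Mathlib

section
/- Let Y be a real-valued random variable whose law has a density f with respect to Lebesgue measure, with CDF F, and suppose Y is integrable. Then for every Q ∈ ℝ, the function Q ↦ E[max(Q − Y, 0)] is differentiable at Q with derivative F(Q). -/
open MeasureTheory ProbabilityTheory
open scoped ENNReal NNReal

/-!
Writing `max (Q - y) 0 = ∫_{-∞}^{Q} 1{y ≤ t} dt` and exchanging the integrals (Fubini) gives
`E[max (b - Y) 0] - E[max (a - Y) 0] = ∫_a^b F(t) dt`. A law with a density has no atoms, so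
its CDF `F` is continuous and the fundamental theorem of calculus yields the derivative `F(Q)`.
-/

open Set

theorem hasDerivWithinAt_max_sub_Ioi (y t : ℝ) :
    HasDerivWithinAt (fun s => max (s - y) 0) ((Iic t).indicator 1 y) (Ioi t) t := by
  rcases le_or_gt y t with hyt | hty
  · rw [indicator_of_mem (show y ∈ Iic t from hyt), Pi.one_apply]
    refine ((hasDerivAt_id t).sub_const y).hasDerivWithinAt.congr (fun s hs => ?_) ?_
    · exact max_eq_left (by simp only [mem_Ioi] at hs; linarith)
    · exact max_eq_left (by linarith)
  · rw [indicator_of_notMem (show y ∉ Iic t from not_le.2 hty)]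
    refine ((hasDerivAt_const t (0 : ℝ)).congr_of_eventuallyEq ?_).hasDerivWithinAt
    filter_upwards [eventually_lt_nhds hty] with s hs
    exact max_eq_right (by linarith)

theorem integral_indicator_Iic_one (y a b : ℝ) :
    ∫ t in a..b, (Iic t).indicator 1 y = max (b - y) 0 - max (a - y) 0 := by
  have hcont : Continuous fun s : ℝ => max (s - y) 0 := by fun_prop
  refine intervalIntegral.integral_eq_sub_of_hasDeriv_right hcont.continuousOn
    (fun t _ => hasDerivWithinAt_max_sub_Ioi y t) (Monotone.intervalIntegrable ?_)
  intro t t' htt'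
  exact indicator_le_indicator_of_subset (Iic_subset_Iic.2 htt') (fun _ => zero_le_one) y

theorem integral_max_sub_sub_integral_max_sub (ν : Measure ℝ) [IsProbabilityMeasure ν]
    (hν : Integrable id ν) (a b : ℝ) :
    ∫ y, max (b - y) 0 ∂ν - ∫ y, max (a - y) 0 ∂ν = ∫ t in a..b, cdf ν t := by
  have hint (Q : ℝ) : Integrable (fun y => max (Q - y) 0) ν :=
    ((integrable_const Q).sub hν).sup (integrable_const 0)
  have hprod : Integrable (Function.uncurry fun t y => (Iic t).indicator (1 : ℝ → ℝ) y)
      ((volume.restrict (uIoc a b)).prod ν) := by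
    have : IsFiniteMeasure (volume.restrict (uIoc a b)) := by rw [uIoc]; infer_instance
    exact (integrable_const (1 : ℝ)).indicator (measurableSet_le measurable_snd measurable_fst)
  calc ∫ y, max (b - y) 0 ∂ν - ∫ y, max (a - y) 0 ∂ν
      = ∫ y, (∫ t in a..b, (Iic t).indicator 1 y) ∂ν := by
        rw [← integral_sub (hint b) (hint a)]
        simp_rw [integral_indicator_Iic_one]
    _ = ∫ t in a..b, ∫ y, (Iic t).indicator 1 y ∂ν :=
        (intervalIntegral_integral_swap hprod).symm
    _ = ∫ t in a..b, cdf ν t := by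
        simp_rw [integral_indicator_one measurableSet_Iic, cdf_eq_real]

theorem continuous_cdf (ν : Measure ℝ) [IsProbabilityMeasure ν] [NullSingletonClass ν] :
    Continuous (cdf ν) := by
  refine continuous_iff_continuousAt.2 fun x => ?_
  rw [(cdf ν).mono.continuousAt_iff_leftLim_eq_rightLim, StieltjesFunction.rightLim_eq]
  have hjump : (cdf ν).measure {x} = 0 := by rw [measure_cdf]; exact measure_singleton x
  rw [StieltjesFunction.measure_singleton, ENNReal.ofReal_eq_zero] at hjump
  exact le_antisymm ((cdf ν).mono.leftLim_le le_rfl) (sub_nonpos.1 hjump)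

theorem hasDerivAt_integral_max_sub (ν : Measure ℝ) [IsProbabilityMeasure ν]
    [NullSingletonClass ν] (hν : Integrable id ν) (Q : ℝ) :
    HasDerivAt (fun Q' => ∫ y, max (Q' - y) 0 ∂ν) (cdf ν Q) Q := by
  have hF := continuous_cdf ν
  have hFTC := (intervalIntegral.integral_hasDerivAt_right (hF.intervalIntegrable Q Q)
    hF.aestronglyMeasurable.stronglyMeasurableAtFilter hF.continuousAt).const_add
      (∫ y, max (Q - y) 0 ∂ν)
  refine hFTC.congr_of_eventuallyEq (Filter.Eventually.of_forall fun Q' => ?_)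
  dsimp only
  rw [← integral_max_sub_sub_integral_max_sub ν hν Q Q']
  ring

theorem stmt_2_general
    {Ω : Type*} [MeasurableSpace Ω] (μ : Measure Ω) [IsProbabilityMeasure μ]
    (Y : Ω → ℝ) (hY : Measurable Y) (hint : Integrable Y μ)
    (f : ℝ → ℝ≥0∞)
    (hdens : μ.map Y = volume.withDensity f) :
    ∀ Q : ℝ,
      HasDerivAt (fun Q' : ℝ => ∫ ω, max (Q' - Y ω) 0 ∂μ)
        (cdf (μ.map Y) Q) Q := by
  intro Q
  have : IsProbabilityMeasure (μ.map Y) := Measure.isProbabilityMeasure_map hY.aemeasurable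
  have : NullSingletonClass (μ.map Y) := hdens ▸ inferInstance
  have hint' : Integrable id (μ.map Y) :=
    (integrable_map_measure aestronglyMeasurable_id hY.aemeasurable).2 hint
  convert hasDerivAt_integral_max_sub (μ.map Y) hint' Q using 1
  funext Q'
  have hmax : Continuous fun y : ℝ => max (Q' - y) 0 := by fun_prop
  exact (integral_map hY.aemeasurable hmax.aestronglyMeasurable).symm

/-- If an integrable real random variable `Y` has a density `f` with respect to Lebesgue
measure, then `Q ↦ E[max (Q - Y) 0]` is differentiable at every `Q` with derivative
`F Q`, where `F` is the CDF of `Y`. -/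
theorem stmt_2
    {Ω : Type*} [MeasurableSpace Ω] (μ : Measure Ω) [IsProbabilityMeasure μ]
    (Y : Ω → ℝ) (hY : Measurable Y) (hint : Integrable Y μ)
    (f : ℝ → ℝ≥0∞) (hf : Measurable f)
    (hdens : μ.map Y = volume.withDensity f) :
    ∀ Q : ℝ,
      HasDerivAt (fun Q' : ℝ => ∫ ω, max (Q' - Y ω) 0 ∂μ)
        (cdf (μ.map Y) Q) Q :=
  stmt_2_general μ Y hY hint f hdens
end

section
/- Let Y be a real-valued random variable whose law has a density f with respect to Lebesgue measure, with CDF F, and suppose Y is integrable. Then for every Q ∈ ℝ, the function Q ↦ E[max(Y − Q, 0)] is differentiable at Q with derivative F(Q) − 1. -/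
open MeasureTheory ProbabilityTheory Set
open scoped ENNReal NNReal

lemma lipschitzWith_max_const_sub_zero (y : ℝ) : LipschitzWith 1 (fun x : ℝ => max (y - x) 0) :=
  (LipschitzWith.of_dist_le_mul fun x x' => by
    rw [NNReal.coe_one, one_mul, dist_sub_left]).max_const 0

lemma hasDerivAt_max_const_sub_zero {y Q : ℝ} (h : y ≠ Q) :
    HasDerivAt (fun x : ℝ => max (y - x) 0) ((Ioi Q).indicator (fun _ => -1) y) Q := by
  rcases h.lt_or_gt with h | h
  · rw [indicator_of_notMem (notMem_Ioi.mpr h.le)]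
    refine (hasDerivAt_const Q 0).congr_of_eventuallyEq ?_
    filter_upwards [Ioi_mem_nhds h] with x hx
    exact max_eq_right (sub_nonpos.mpr hx.le)
  · rw [indicator_of_mem (mem_Ioi.mpr h)]
    refine ((hasDerivAt_id Q).const_sub y).congr_of_eventuallyEq ?_
    filter_upwards [Iio_mem_nhds h] with x hx
    exact max_eq_left (sub_nonneg.mpr hx.le)

/-- Differentiation under the integral sign: the integrand is `1`-Lipschitz in `Q'`, and
differentiable at `Q` off the null set `{Y = Q}`. -/
lemma hasDerivAt_integral_max_sub_zero {Ω : Type*} [MeasurableSpace Ω] {μ : Measure Ω}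
    [IsFiniteMeasure μ] {Y : Ω → ℝ} (hY : Measurable Y) (hint : Integrable Y μ) {Q : ℝ}
    (hQ : μ (Y ⁻¹' {Q}) = 0) :
    HasDerivAt (fun Q' : ℝ => ∫ ω, max (Y ω - Q') 0 ∂μ) (-μ.real (Y ⁻¹' Ioi Q)) Q := by
  have hmeas : MeasurableSet (Y ⁻¹' Ioi Q) := hY measurableSet_Ioi
  have key := hasDerivAt_integral_of_dominated_loc_of_lip (μ := μ) (bound := fun _ => 1)
    (F := fun Q' ω => max (Y ω - Q') 0) (F' := (Y ⁻¹' Ioi Q).indicator fun _ => -1)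
    (s := univ) Filter.univ_mem
    (.of_forall fun Q' => ((hY.sub_const Q').max measurable_const).aestronglyMeasurable)
    (hint.sub (integrable_const Q)).pos_part
    ((measurable_const.indicator hmeas).aestronglyMeasurable)
    (.of_forall fun ω => by simpa using lipschitzWith_max_const_sub_zero (Y ω))
    (integrable_const 1)
    ((measure_eq_zero_iff_ae_notMem.mp hQ).mono fun ω hω =>
      hasDerivAt_max_const_sub_zero hω)
  simpa [integral_indicator_const _ hmeas] using key.2

lemma one_sub_cdf (ν : Measure ℝ) [IsProbabilityMeasure ν] (x : ℝ) :
    1 - cdf ν x = ν.real (Ioi x) := by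
  rw [cdf_eq_real, ← probReal_compl_eq_one_sub measurableSet_Iic, compl_Iic]

theorem stmt_3_general
    {Ω : Type*} [MeasurableSpace Ω] (μ : Measure Ω) [IsProbabilityMeasure μ]
    (Y : Ω → ℝ) (hY : Measurable Y) (hint : Integrable Y μ)
    (f : ℝ → ℝ≥0∞)
    (hdens : μ.map Y = volume.withDensity f) :
    ∀ Q : ℝ,
      HasDerivAt (fun Q' : ℝ => ∫ ω, max (Y ω - Q') 0 ∂μ)
        (cdf (μ.map Y) Q - 1) Q := by
  intro Q
  have : IsProbabilityMeasure (μ.map Y) := Measure.isProbabilityMeasure_map hY.aemeasurable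
  have hQ : μ (Y ⁻¹' {Q}) = 0 := by
    rw [← Measure.map_apply hY (measurableSet_singleton Q), hdens]
    -- `withDensity` of the atomless Lebesgue measure is atomless
    exact measure_singleton Q
  have hderiv := hasDerivAt_integral_max_sub_zero hY hint hQ
  rwa [← map_measureReal_apply hY measurableSet_Ioi, ← one_sub_cdf, neg_sub] at hderiv

/-- If an integrable real random variable `Y` has a density `f` with respect to Lebesgue
measure, then `Q ↦ E[max (Y - Q) 0]` is differentiable at every `Q` with derivative
`F Q - 1`, where `F` is the CDF of `Y`. -/
theorem stmt_3
    {Ω : Type*} [MeasurableSpace Ω] (μ : Measure Ω) [IsProbabilityMeasure μ]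
    (Y : Ω → ℝ) (hY : Measurable Y) (hint : Integrable Y μ)
    (f : ℝ → ℝ≥0∞) (hf : Measurable f)
    (hdens : μ.map Y = volume.withDensity f) :
    ∀ Q : ℝ,
      HasDerivAt (fun Q' : ℝ => ∫ ω, max (Y ω - Q') 0 ∂μ)
        (cdf (μ.map Y) Q - 1) Q :=
  stmt_3_general μ Y hY hint f hdens
end

section
/- Let T ≥ 1, let h, b, p ≥ 0 and w_1,...,w_T ∈ ℝ, let q ∈ ℝ^T, and let X_1,...,X_T be independent normal random variables with X_t ~ N(μ_t, σ_t²), σ_t > 0. Define I_t = Σ_{k=1}^t (q_k − X_k), I_t^+ = max(I_t, 0), I_t^− = max(−I_t, 0), a_t = h + b + p·1{t=T}, s_t = √(Σ_{k=1}^t σ_k²), and β_t = (Σ_{k=1}^t (μ_k − q_k))/s_t. Then the expected cost p·E[I_T^−] + Σ_{t=1}^T ( h·E[I_t^+] + b·E[I_t^−] + w_t q_t − p·μ_t ) equals Σ_{t=1}^T [ (a_t·Φ(β_t) − h)·Σ_{k=1}^t (μ_k − q_k) + a_t·φ(β_t)·s_t + w_t q_t − p·μ_t ], where Φ and φ are the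 standard normal CDF and PDF. -/
open MeasureTheory ProbabilityTheory
open scoped ENNReal NNReal

/-- The standard normal cumulative distribution function `Φ`. -/
noncomputable def stdNormalCDF (x : ℝ) : ℝ :=
  (gaussianReal 0 1 (Set.Iic x)).toReal

/-- The standard normal probability density function `φ`. -/
noncomputable def stdNormalPDF (x : ℝ) : ℝ := gaussianPDFReal 0 1 x

/-!
By independence, the inventory `I_t = ∑_{k ≤ t} (q_k - X_k)` is Gaussian with mean `-D_t`,
`D_t = ∑_{k ≤ t} (μ_k - q_k)`, and variance `s_t²`. For a standard normal `Z`,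
`E[(c - Z)⁺] = c Φ(c) + φ(c)` because `φ' = -z φ` gives `∫_{-∞}^c z φ(z) dz = -φ(c)`; writing
`I_t = -D_t + s_t Z` turns this into `E[I_t⁻] = D_t Φ(β_t) + s_t φ(β_t)`, and
`E[I_t⁺] = E[I_t] + E[I_t⁻] = E[I_t⁻] - D_t`. The closed form is then a matter of collecting terms.
-/

open Real Set Filter Topology

lemma stdNormalPDF_eq (x : ℝ) : stdNormalPDF x = (√(2 * π))⁻¹ * exp (-(1 / 2) * x ^ 2) := by
  simp only [stdNormalPDF, gaussianPDFReal, NNReal.coe_one, mul_one, sub_zero]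
  ring_nf

lemma hasDerivAt_stdNormalPDF (x : ℝ) : HasDerivAt stdNormalPDF (-x * stdNormalPDF x) x := by
  have h := (((hasDerivAt_pow 2 x).const_mul (-(1 / 2) : ℝ)).exp).const_mul (√(2 * π))⁻¹
  rw [show stdNormalPDF = _ from funext stdNormalPDF_eq]
  refine h.congr_deriv ?_
  push_cast
  ring

lemma tendsto_stdNormalPDF_atBot : Tendsto stdNormalPDF atBot (𝓝 0) := by
  rw [funext stdNormalPDF_eq, ← mul_zero (√(2 * π))⁻¹]
  refine (tendsto_exp_atBot.comp ?_).const_mul _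
  have hsq : Tendsto (fun x : ℝ => x ^ 2) atBot atTop := by
    simpa [Function.comp_def] using
      (tendsto_pow_atTop two_ne_zero).comp (tendsto_neg_atBot_atTop (G := ℝ))
  exact hsq.const_mul_atTop_of_neg (by norm_num : -(1 / 2 : ℝ) < 0)

lemma integrable_mul_stdNormalPDF : Integrable fun x => x * stdNormalPDF x := by
  simp_rw [stdNormalPDF_eq, mul_left_comm _ (√(2 * π))⁻¹]
  exact (integrable_mul_exp_neg_mul_sq (by norm_num)).const_mul _

lemma integral_Iic_mul_stdNormalPDF (c : ℝ) :
    ∫ x in Iic c, x * stdNormalPDF x = -stdNormalPDF c := by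
  have h := integral_Iic_of_hasDerivAt_of_tendsto' (fun x _ => hasDerivAt_stdNormalPDF x) (a := c)
    (by simpa only [neg_mul] using integrable_mul_stdNormalPDF.fun_neg.integrableOn)
    tendsto_stdNormalPDF_atBot
  rw [sub_zero] at h
  simp only [neg_mul, integral_neg] at h
  linarith

lemma integral_Iic_stdNormalPDF (c : ℝ) : ∫ x in Iic c, stdNormalPDF x = stdNormalCDF c := by
  rw [stdNormalCDF, gaussianReal_apply_eq_integral _ one_ne_zero, ENNReal.toReal_ofReal
    (setIntegral_nonneg measurableSet_Iic fun x _ => gaussianPDFReal_nonneg _ _ _)]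
  rfl

lemma integral_max_sub_gaussianReal_zero_one (c : ℝ) :
    ∫ z, max (c - z) 0 ∂gaussianReal 0 1 = c * stdNormalCDF c + stdNormalPDF c := by
  have hpdf : Integrable stdNormalPDF := integrable_gaussianPDFReal 0 1
  calc ∫ z, max (c - z) 0 ∂gaussianReal 0 1
      = ∫ z in Iic c, c * stdNormalPDF z - z * stdNormalPDF z := by
        rw [integral_gaussianReal_eq_integral_smul one_ne_zero,
          ← integral_indicator measurableSet_Iic]
        congr 1 with z
        by_cases hz : z ≤ c
        · rw [indicator_of_mem (show z ∈ Iic c from hz), max_eq_left (sub_nonneg.2 hz),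
            smul_eq_mul, stdNormalPDF]
          ring
        · rw [indicator_of_notMem (show z ∉ Iic c from hz), max_eq_right (by linarith),
            smul_zero]
    _ = c * stdNormalCDF c + stdNormalPDF c := by
        rw [integral_sub (hpdf.const_mul c).integrableOn integrable_mul_stdNormalPDF.integrableOn,
          integral_const_mul, integral_Iic_stdNormalPDF, integral_Iic_mul_stdNormalPDF,
          sub_neg_eq_add]

lemma Finset.sum_Icc_one_eq_sum_fin {M : Type*} [AddCommMonoid M] (f : ℕ → M) (t : ℕ) :
    ∑ k ∈ Finset.Icc 1 t, f k = ∑ i : Fin t, f (i + 1) := by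
  rw [Fin.sum_univ_eq_sum_range (fun i => f (i + 1)), Finset.range_eq_Ico,
    Finset.sum_Ico_add' f 0 t 1]
  rfl

namespace ProbabilityTheory

variable {Ω : Type*} [MeasurableSpace Ω] {P : Measure Ω}

lemma gaussianReal_eq_map_gaussianReal_zero_one (m : ℝ) (v : ℝ≥0) :
    gaussianReal m v = (gaussianReal 0 1).map (fun z => √v * z + m) := by
  have h : (fun z => √v * z + m) = (· + m) ∘ (√v * ·) := rfl
  rw [h, ← Measure.map_map (by fun_prop) (by fun_prop), gaussianReal_map_const_mul,
    gaussianReal_map_add_const, mul_zero, zero_add, mul_one]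
  congr
  ext
  simp

lemma HasLaw.integral_max_neg_gaussianReal {Y : Ω → ℝ} {m : ℝ} {v : ℝ≥0}
    (hY : HasLaw Y (gaussianReal m v) P) (hv : v ≠ 0) :
    ∫ ω, max (-Y ω) 0 ∂P = -m * stdNormalCDF (-m / √v) + √v * stdNormalPDF (-m / √v) := by
  have hs : 0 < √(v : ℝ) := Real.sqrt_pos.2 (NNReal.coe_pos.2 (pos_iff_ne_zero.2 hv))
  rw [show (fun ω => max (-Y ω) 0) = (fun y => max (-y) 0) ∘ Y from rfl,
    hY.integral_comp (by fun_prop), gaussianReal_eq_map_gaussianReal_zero_one,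
    integral_map (by fun_prop) (by fun_prop)]
  calc ∫ z, max (-(√v * z + m)) 0 ∂gaussianReal 0 1
      = ∫ z, √v * max (-m / √v - z) 0 ∂gaussianReal 0 1 := by
        congr 1 with z
        rw [mul_max_of_nonneg _ _ hs.le, mul_sub, mul_div_cancel₀ _ hs.ne', mul_zero]
        ring_nf
    _ = -m * stdNormalCDF (-m / √v) + √v * stdNormalPDF (-m / √v) := by
        rw [integral_const_mul, integral_max_sub_gaussianReal_zero_one, mul_add, ← mul_assoc,
          mul_div_cancel₀ _ hs.ne']

lemma HasLaw.integral_max_gaussianReal {Y : Ω → ℝ} {m : ℝ} {v : ℝ≥0}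
    (hY : HasLaw Y (gaussianReal m v) P) :
    ∫ ω, max (Y ω) 0 ∂P = m + ∫ ω, max (-Y ω) 0 ∂P := by
  have hint : Integrable (fun y => y) (gaussianReal m v) :=
    (memLp_id_gaussianReal 1).integrable le_rfl
  rw [show (fun ω => max (Y ω) 0) = (fun y => max y 0) ∘ Y from rfl,
    show (fun ω => max (-Y ω) 0) = (fun y => max (-y) 0) ∘ Y from rfl,
    hY.integral_comp (by fun_prop), hY.integral_comp (by fun_prop)]
  calc ∫ y, max y 0 ∂gaussianReal m v = ∫ y, (y + max (-y) 0) ∂gaussianReal m v := by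
        congr 1 with y
        rcases le_total y 0 with hy | hy
        · rw [max_eq_right hy, max_eq_left (neg_nonneg.2 hy), add_neg_cancel]
        · rw [max_eq_left hy, max_eq_right (neg_nonpos.2 hy), add_zero]
    _ = m + ∫ y, max (-y) 0 ∂gaussianReal m v := by
        rw [integral_add hint hint.neg_part, integral_id_gaussianReal]

variable [IsProbabilityMeasure P]

lemma iIndepFun.hasLaw_sum_gaussianReal {ι : Type*} {X : ι → Ω → ℝ} (hindep : iIndepFun X P)
    {m : ι → ℝ} {v : ι → ℝ≥0} (hX : ∀ i, HasLaw (X i) (gaussianReal (m i) (v i)) P)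
    (s : Finset ι) :
    HasLaw (∑ i ∈ s, X i) (gaussianReal (∑ i ∈ s, m i) (∑ i ∈ s, v i)) P := by
  classical
  induction s using Finset.induction_on with
  | empty =>
    exact ⟨aemeasurable_const, by simp [gaussianReal_zero_var, Pi.zero_def, Measure.map_const]⟩
  | insert a s ha ih =>
    rw [Finset.sum_insert ha, Finset.sum_insert ha, Finset.sum_insert ha,
      ← gaussianReal_conv_gaussianReal]
    exact IndepFun.hasLaw_add (hX a) ih
      (hindep.indepFun_finsetSum_of_notMem₀ (fun i => (hX i).aemeasurable) ha).symm

lemma hasLaw_sum_Icc_sub_gaussianReal {T t : ℕ} (ht : t ≤ T) (q : ℕ → ℝ) {m : ℕ → ℝ}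
    {v : ℕ → ℝ≥0} {X : ℕ → Ω → ℝ} (hindep : iIndepFun (fun i : Fin T => X (i + 1)) P)
    (hX : ∀ k, 1 ≤ k → k ≤ T → HasLaw (X k) (gaussianReal (m k) (v k)) P) :
    HasLaw (fun ω => ∑ k ∈ Finset.Icc 1 t, (q k - X k ω))
      (gaussianReal (-∑ k ∈ Finset.Icc 1 t, (m k - q k)) (∑ k ∈ Finset.Icc 1 t, v k)) P := by
  have hS := (hindep.precomp (Fin.castLE_injective ht)).hasLaw_sum_gaussianReal
    (fun i => hX (i + 1) (by omega) (by omega)) Finset.univ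
  convert gaussianReal_const_sub hS (∑ k ∈ Finset.Icc 1 t, q k) using 2 <;>
    simp [Finset.sum_Icc_one_eq_sum_fin]

end ProbabilityTheory

theorem stmt_8_general
    {Ω : Type*} [MeasurableSpace Ω] (P : Measure Ω) [IsProbabilityMeasure P]
    (T : ℕ) (hT : 1 ≤ T)
    (h b p : ℝ)
    (w q μv σ : ℕ → ℝ) (hσ : ∀ t, 1 ≤ t → t ≤ T → 0 < σ t)
    (X : ℕ → Ω → ℝ) (hX : ∀ t, 1 ≤ t → t ≤ T → Measurable (X t))
    (hindep : iIndepFun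
      (fun i : Fin T => X (i + 1)) P)
    (hlaw : ∀ t, 1 ≤ t → t ≤ T →
      P.map (X t) = gaussianReal (μv t) (((σ t) ^ 2).toNNReal)) :
    p * (∫ ω, max (-(∑ k ∈ Finset.Icc 1 T, (q k - X k ω))) 0 ∂P)
      + ∑ t ∈ Finset.Icc 1 T,
          (h * (∫ ω, max (∑ k ∈ Finset.Icc 1 t, (q k - X k ω)) 0 ∂P)
            + b * (∫ ω, max (-(∑ k ∈ Finset.Icc 1 t, (q k - X k ω))) 0 ∂P)
            + w t * q t - p * μv t)
    = ∑ t ∈ Finset.Icc 1 T,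
        (((h + b + (if t = T then p else 0))
            * stdNormalCDF ((∑ k ∈ Finset.Icc 1 t, (μv k - q k))
                / Real.sqrt (∑ k ∈ Finset.Icc 1 t, (σ k) ^ 2)) - h)
          * (∑ k ∈ Finset.Icc 1 t, (μv k - q k))
         + (h + b + (if t = T then p else 0))
            * stdNormalPDF ((∑ k ∈ Finset.Icc 1 t, (μv k - q k))
                / Real.sqrt (∑ k ∈ Finset.Icc 1 t, (σ k) ^ 2))
            * Real.sqrt (∑ k ∈ Finset.Icc 1 t, (σ k) ^ 2)
         + w t * q t - p * μv t) := by
  have hI : ∀ t ≤ T, HasLaw (fun ω => ∑ k ∈ Finset.Icc 1 t, (q k - X k ω))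
      (gaussianReal (-∑ k ∈ Finset.Icc 1 t, (μv k - q k))
        (∑ k ∈ Finset.Icc 1 t, ((σ k) ^ 2).toNNReal)) P := fun t ht =>
    hasLaw_sum_Icc_sub_gaussianReal ht q hindep fun k hk hkT =>
      ⟨(hX k hk hkT).aemeasurable, hlaw k hk hkT⟩
  have hvar : ∀ t, ((∑ k ∈ Finset.Icc 1 t, ((σ k) ^ 2).toNNReal : ℝ≥0) : ℝ)
      = ∑ k ∈ Finset.Icc 1 t, (σ k) ^ 2 := fun t => by
    simp [Real.coe_toNNReal _ (sq_nonneg _)]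
  have hv : ∀ t, 1 ≤ t → t ≤ T → ∑ k ∈ Finset.Icc 1 t, ((σ k) ^ 2).toNNReal ≠ 0 := by
    intro t ht htT h0
    exact (Real.toNNReal_pos.2 (pow_pos (hσ 1 le_rfl (ht.trans htT)) 2)).ne'
      (Finset.sum_eq_zero_iff.1 h0 1 (Finset.mem_Icc.2 ⟨le_rfl, ht⟩))
  have hpT : p * ∫ ω, max (-(∑ k ∈ Finset.Icc 1 T, (q k - X k ω))) 0 ∂P
      = ∑ t ∈ Finset.Icc 1 T,
          (if t = T then p else 0) * ∫ ω, max (-(∑ k ∈ Finset.Icc 1 t, (q k - X k ω))) 0 ∂P := by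
    simp [ite_mul, hT]
  rw [hpT, ← Finset.sum_add_distrib]
  refine Finset.sum_congr rfl fun t ht => ?_
  obtain ⟨ht1, htT⟩ := Finset.mem_Icc.1 ht
  rw [(hI t htT).integral_max_gaussianReal,
    (hI t htT).integral_max_neg_gaussianReal (hv t ht1 htT), hvar, neg_neg]
  ring

/-- Closed form of the expected cost of the static multi-period newsvendor problem under
independent normal demands `X t ~ N(μ t, σ t ^ 2)`. -/
theorem stmt_8
    {Ω : Type*} [MeasurableSpace Ω] (P : Measure Ω) [IsProbabilityMeasure P]
    (T : ℕ) (hT : 1 ≤ T)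
    (h b p : ℝ) (hh : 0 ≤ h) (hb : 0 ≤ b) (hp : 0 ≤ p)
    (w q μv σ : ℕ → ℝ) (hσ : ∀ t, 1 ≤ t → t ≤ T → 0 < σ t)
    (X : ℕ → Ω → ℝ) (hX : ∀ t, 1 ≤ t → t ≤ T → Measurable (X t))
    (hindep : iIndepFun
      (fun i : Fin T => X (i + 1)) P)
    (hlaw : ∀ t, 1 ≤ t → t ≤ T →
      P.map (X t) = gaussianReal (μv t) (((σ t) ^ 2).toNNReal)) :
    p * (∫ ω, max (-(∑ k ∈ Finset.Icc 1 T, (q k - X k ω))) 0 ∂P)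
      + ∑ t ∈ Finset.Icc 1 T,
          (h * (∫ ω, max (∑ k ∈ Finset.Icc 1 t, (q k - X k ω)) 0 ∂P)
            + b * (∫ ω, max (-(∑ k ∈ Finset.Icc 1 t, (q k - X k ω))) 0 ∂P)
            + w t * q t - p * μv t)
    = ∑ t ∈ Finset.Icc 1 T,
        (((h + b + (if t = T then p else 0))
            * stdNormalCDF ((∑ k ∈ Finset.Icc 1 t, (μv k - q k))
                / Real.sqrt (∑ k ∈ Finset.Icc 1 t, (σ k) ^ 2)) - h)
          * (∑ k ∈ Finset.Icc 1 t, (μv k - q k))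
         + (h + b + (if t = T then p else 0))
            * stdNormalPDF ((∑ k ∈ Finset.Icc 1 t, (μv k - q k))
                / Real.sqrt (∑ k ∈ Finset.Icc 1 t, (σ k) ^ 2))
            * Real.sqrt (∑ k ∈ Finset.Icc 1 t, (σ k) ^ 2)
         + w t * q t - p * μv t) :=
  stmt_8_general P T hT h b p w q μv σ hσ X hX hindep hlaw
end

section
/- Let T ≥ 1, h, b, p ≥ 0, w ∈ ℝ^T, q ∈ ℕ^T, and fix λ_j > 0 for all j ≠ k. Define Q_t = Σ_{k'=1}^t q_{k'}, Λ_t = Σ_{k'=1}^t λ_{k'}, a_t = h + b + p·1{t=T}, F̃_t(n) = Σ_{x=0}^n e^{−Λ_t}Λ_t^x/x! (with F̃_t(−1) = 0), and C_λ(q) = Σ_{t=1}^T [ a_t·Q_t·F̃_t(Q_t) − Λ_t·a_t·F̃_t(Q_t − 1) + (b + p·1{t=T})·(Λ_t − Q_t) + w_t q_t − p·λ_t ]. Then for every k ∈ {1,...,T}, the function λ_k ↦ C_λ(q) is convex on (0, ∞). -/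
/-- Closed-form expected cost `C_λ(q)` of the multi-period newsvendor problem under
independent Poisson demands, as a function of the rate vector `lam`. -/
noncomputable def poissonCost (T : ℕ) (h b p : ℝ) (w : ℕ → ℝ) (q : ℕ → ℕ)
    (lam : ℕ → ℝ) : ℝ :=
  ∑ t ∈ Finset.Icc 1 T,
    ((h + b + (if t = T then p else 0)) * ((∑ k ∈ Finset.Icc 1 t, q k : ℕ) : ℝ)
        * (∑ x ∈ Finset.range ((∑ k ∈ Finset.Icc 1 t, q k) + 1),
            Real.exp (-(∑ k ∈ Finset.Icc 1 t, lam k))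
              * (∑ k ∈ Finset.Icc 1 t, lam k) ^ x / (Nat.factorial x))
     - (∑ k ∈ Finset.Icc 1 t, lam k) * (h + b + (if t = T then p else 0))
        * (∑ x ∈ Finset.range (∑ k ∈ Finset.Icc 1 t, q k),
            Real.exp (-(∑ k ∈ Finset.Icc 1 t, lam k))
              * (∑ k ∈ Finset.Icc 1 t, lam k) ^ x / (Nat.factorial x))
     + (b + (if t = T then p else 0))
        * ((∑ k ∈ Finset.Icc 1 t, lam k) - ((∑ k ∈ Finset.Icc 1 t, q k : ℕ) : ℝ))
     + w t * (q t : ℝ) - p * lam t)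

/-!
The `t`-th summand of `C_λ(q)` is `a_t · E[(Q_t - X)⁺]` with `X ~ Poisson(Λ_t)`, plus terms
affine in `λ_k`. As a function of the rate `y`, `E[(Q - X)⁺]` has derivative `-P(X < Q)`, and
`P(X < Q)` has derivative `-P(X = Q - 1) ≤ 0`, so it is convex on `[0, ∞)`. Finally `Λ_t` is
either independent of `λ_k` (when `t < k`) or equal to `λ_k` translated by the nonnegative
rates `λ_j`, `j ≠ k`, which preserves convexity.
-/

open Finset Real Set Function
open scoped Nat

section ConvexSum

variable {𝕜 E β ι : Type*} [Semiring 𝕜] [PartialOrder 𝕜] [AddCommMonoid E] [SMul 𝕜 E]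
  [AddCommMonoid β] [PartialOrder β] [IsOrderedAddMonoid β] [Module 𝕜 β] {s : Set E}

theorem convexOn_finset_sum (hs : Convex 𝕜 s) (t : Finset ι) {f : ι → E → β}
    (hf : ∀ i ∈ t, ConvexOn 𝕜 s (f i)) : ConvexOn 𝕜 s fun x => ∑ i ∈ t, f i x := by
  rw [← Finset.sum_fn]
  exact Finset.sum_induction f (ConvexOn 𝕜 s) (fun _ _ => ConvexOn.add) (convexOn_const 0 hs) hf

end ConvexSum

theorem ConvexOn.comp_sum_update {g : ℝ → ℝ} (hg : ConvexOn ℝ (Ici 0) g) {ι : Type*}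
    [DecidableEq ι] {s : Finset ι} {f : ι → ℝ} {k : ι} (hf : ∀ j ∈ s, j ≠ k → 0 ≤ f j) :
    ConvexOn ℝ (Ici 0) fun x => g (∑ j ∈ s, update f k x j) := by
  by_cases hk : k ∈ s
  · simp_rw [sum_update_of_mem hk]
    set c := ∑ j ∈ s \ {k}, f j
    have hc : 0 ≤ c := sum_nonneg fun j hj => by
      rw [Finset.mem_sdiff, Finset.mem_singleton] at hj
      exact hf j hj.1 hj.2
    refine ((hg.translate_right c).subset (fun x hx => add_nonneg hc hx) (convex_Ici 0)).congr
      fun x _ => ?_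
    rw [comp_apply, add_comm]
  · simp_rw [sum_update_of_notMem hk]
    exact convexOn_const _ (convex_Ici 0)

theorem convexOn_mul_update_apply {ι : Type*} [DecidableEq ι] (c : ℝ) (f : ι → ℝ) (k t : ι)
    {s : Set ℝ} (hs : Convex ℝ s) : ConvexOn ℝ s fun x => c * update f k x t := by
  rcases eq_or_ne t k with rfl | htk
  · simp only [update_self]
    exact (LinearMap.mul ℝ ℝ c).convexOn hs
  · simpa only [update_of_ne htk] using convexOn_const (c * f t) hs

noncomputable def poissonWeight (n : ℕ) (y : ℝ) : ℝ :=
  exp (-y) * y ^ n / n !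

/-- `poissonProbLT n y = P(X < n)` for `X ~ Poisson(y)`: the paper's `F̃(n - 1)`, with
`F̃(-1) = 0` for `n = 0`. -/
noncomputable def poissonProbLT (n : ℕ) (y : ℝ) : ℝ :=
  ∑ i ∈ range n, poissonWeight i y

/-- `E[(Q - X)⁺]` for `X ~ Poisson(y)`. -/
noncomputable def expectedLeftover (Q : ℕ) (y : ℝ) : ℝ :=
  Q * poissonProbLT (Q + 1) y - y * poissonProbLT Q y

theorem expectedLeftover_zero : expectedLeftover 0 = 0 :=
  funext fun y => by simp [expectedLeftover, poissonProbLT]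

theorem poissonWeight_nonneg (n : ℕ) {y : ℝ} (hy : 0 ≤ y) : 0 ≤ poissonWeight n y := by
  unfold poissonWeight
  positivity

theorem succ_mul_poissonWeight_succ (n : ℕ) (y : ℝ) :
    (n + 1) * poissonWeight (n + 1) y = y * poissonWeight n y := by
  unfold poissonWeight
  rw [Nat.factorial_succ]
  push_cast
  field_simp
  ring

theorem hasDerivAt_poissonWeight_zero (y : ℝ) :
    HasDerivAt (poissonWeight 0) (-poissonWeight 0 y) y := by
  have h : poissonWeight 0 = fun z => exp (-z) := funext fun z => by simp [poissonWeight]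
  rw [h]
  exact (hasDerivAt_neg y).exp.congr_deriv (mul_neg_one _)

theorem hasDerivAt_poissonWeight_succ (n : ℕ) (y : ℝ) :
    HasDerivAt (poissonWeight (n + 1)) (poissonWeight n y - poissonWeight (n + 1) y) y := by
  have h := ((hasDerivAt_neg y).exp.mul (hasDerivAt_pow (n + 1) y)).div_const ((n + 1)! : ℝ)
  refine h.congr_deriv ?_
  unfold poissonWeight
  rw [Nat.factorial_succ]
  push_cast
  field_simp
  ring

theorem hasDerivAt_poissonProbLT_succ (n : ℕ) (y : ℝ) :
    HasDerivAt (poissonProbLT (n + 1)) (-poissonWeight n y) y := by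
  induction n with
  | zero =>
    have h : poissonProbLT 1 = poissonWeight 0 := funext fun z => by simp [poissonProbLT]
    rw [h]
    exact hasDerivAt_poissonWeight_zero y
  | succ n ih =>
    have hsplit : poissonProbLT (n + 2) = poissonProbLT (n + 1) + poissonWeight (n + 1) := by
      funext z
      exact sum_range_succ _ _
    rw [hsplit]
    exact (ih.add (hasDerivAt_poissonWeight_succ n y)).congr_deriv (by ring)

theorem hasDerivAt_expectedLeftover (Q : ℕ) (y : ℝ) :
    HasDerivAt (expectedLeftover Q) (-poissonProbLT Q y) y := by
  cases Q with
  | zero =>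
    rw [expectedLeftover_zero, poissonProbLT, sum_range_zero, neg_zero]
    exact hasDerivAt_const y 0
  | succ n =>
    have h := ((hasDerivAt_poissonProbLT_succ (n + 1) y).const_mul ((n + 1 : ℕ) : ℝ)).sub
      ((hasDerivAt_id y).mul (hasDerivAt_poissonProbLT_succ n y))
    refine h.congr_deriv ?_
    push_cast
    simp only [id]
    linear_combination (-1 : ℝ) * succ_mul_poissonWeight_succ n y

theorem convexOn_expectedLeftover (Q : ℕ) : ConvexOn ℝ (Ici 0) (expectedLeftover Q) := by
  cases Q with
  | zero =>
    rw [expectedLeftover_zero]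
    exact convexOn_const 0 (convex_Ici 0)
  | succ n =>
    refine convexOn_of_hasDerivWithinAt2_nonneg (convex_Ici 0)
      (fun y _ => (hasDerivAt_expectedLeftover _ y).continuousAt.continuousWithinAt)
      (fun y _ => (hasDerivAt_expectedLeftover _ y).hasDerivWithinAt)
      (fun y _ =>
        ((hasDerivAt_poissonProbLT_succ n y).neg.congr_deriv (neg_neg _)).hasDerivWithinAt)
      fun y hy => poissonWeight_nonneg n (interior_Ici.subset hy).le

theorem poissonCost_eq_sum_expectedLeftover (T : ℕ) (h b p : ℝ) (w : ℕ → ℝ) (q : ℕ → ℕ)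
    (lam : ℕ → ℝ) :
    poissonCost T h b p w q lam = ∑ t ∈ Finset.Icc 1 T,
      ((h + b + (if t = T then p else 0)) *
          expectedLeftover (∑ j ∈ Finset.Icc 1 t, q j) (∑ j ∈ Finset.Icc 1 t, lam j)
        + (b + (if t = T then p else 0)) * ∑ j ∈ Finset.Icc 1 t, lam j
        + (w t * q t - (b + (if t = T then p else 0)) * (∑ j ∈ Finset.Icc 1 t, q j : ℕ))
        + -p * lam t) := by
  unfold poissonCost expectedLeftover poissonProbLT poissonWeight
  exact sum_congr rfl fun t _ => by ring

theorem stmt_19_general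
    (T : ℕ)
    (h b p : ℝ) (hh : 0 ≤ h) (hb : 0 ≤ b) (hp : 0 ≤ p)
    (w : ℕ → ℝ) (q : ℕ → ℕ) (lam : ℕ → ℝ) :
    ∀ k, 1 ≤ k → k ≤ T →
      (∀ j, j ≠ k → 1 ≤ j → j ≤ T → 0 < lam j) →
      ConvexOn ℝ (Set.Ioi (0 : ℝ))
        (fun x : ℝ => poissonCost T h b p w q (Function.update lam k x)) := by
  intro k _ _ hlam
  simp only [poissonCost_eq_sum_expectedLeftover]
  refine (convexOn_finset_sum (convex_Ici 0) _ fun t ht => ?_).subset Ioi_subset_Ici_self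
    (convex_Ioi 0)
  have htT := (Finset.mem_Icc.mp ht).2
  have hstage : ConvexOn ℝ (Ici 0) fun y =>
      (h + b + (if t = T then p else 0)) * expectedLeftover (∑ j ∈ Finset.Icc 1 t, q j) y
        + (b + (if t = T then p else 0)) * y
        + (w t * q t - (b + (if t = T then p else 0)) * (∑ j ∈ Finset.Icc 1 t, q j : ℕ)) :=
    (((convexOn_expectedLeftover _).smul (by positivity)).add
      ((LinearMap.mul ℝ ℝ _).convexOn (convex_Ici 0))).add_const _
  have hrates : ∀ j ∈ Finset.Icc 1 t, j ≠ k → 0 ≤ lam j := fun j hj hjk =>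
    (hlam j hjk (Finset.mem_Icc.mp hj).1 ((Finset.mem_Icc.mp hj).2.trans htT)).le
  exact (hstage.comp_sum_update hrates).add
    (convexOn_mul_update_apply (-p) lam k t (convex_Ici 0))

/-- The Poisson-demand newsvendor cost `C_λ(q)` is convex in each rate `λ k` on `(0, ∞)`
(with all other rates fixed). -/
theorem stmt_19
    (T : ℕ) (hT : 1 ≤ T)
    (h b p : ℝ) (hh : 0 ≤ h) (hb : 0 ≤ b) (hp : 0 ≤ p)
    (w : ℕ → ℝ) (q : ℕ → ℕ) (lam : ℕ → ℝ) :
    ∀ k, 1 ≤ k → k ≤ T →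
      (∀ j, j ≠ k → 1 ≤ j → j ≤ T → 0 < lam j) →
      ConvexOn ℝ (Set.Ioi (0 : ℝ))
        (fun x : ℝ => poissonCost T h b p w q (Function.update lam k x)) :=
  stmt_19_general T h b p hh hb hp w q lam
end
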